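/- arXiv:2202.00048 — 2 statements merged into one kernel-verified Lean document; each statement's English description precedes it below -/
import Mathlib

section
/- Let A, B, Q, R, σ², D_ε be LQR data with Q, R symmetric positive definite and D_ε symmetric positive semi-definite, and define for each K with ρ(A−BK) < 1: P_K as the solution of P_K = Q + KᵀRK + (A−BK)ᵀP_K(A−BK), J(K) = Tr(D_ε P_K) + σ² Tr(R), and G_K = (R + BᵀP_K B)K − BᵀP_K A. Then for any two such K, K' with ρ(A−BK) < 1 and ρ(A−BK') < 1, the difference formula holds: J(K) − J(K') = Tr[ D_{K'} ( (K−K')ᵀ G_K + G_Kᵀ (K−K') − (K−K')ᵀ (R + BᵀP_K B) (K−K') ) ], where D_{K'} = ∑_{s≥0} (A−BK')^s D_ε ((A−BK')ᵀ)^s. -/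
/-!
Write `L' = A - BK'`. Using the Riccati-type equations for `P_K` and `P_{K'}` and the symmetry of
`P_K`, the difference `X = P_K - P_{K'}` solves the Lyapunov equation `X = M + L'ᵀ X L'`, where `M`
is the matrix inside the trace on the right-hand side. Since `ρ(L') < 1`, Gelfand's formula gives
`L'^s → 0`, so `X = ∑ₛ (L'ᵀ)^s M L'^s`, and the cyclicity of the trace moves the sum onto `D_ε`:
`Tr(D_ε X) = ∑ₛ Tr(L'^s D_ε (L'ᵀ)^s M) = Tr(D_{K'} M)`. The symmetry of `P_K` comes the same way:
`P_K` and `P_Kᵀ` solve the same Lyapunov equation, whose solution is unique when `ρ(A - BK) < 1`.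
-/

open Matrix Filter MeasureTheory ProbabilityTheory

/-- Spectral radius of a real matrix: the spectral radius (over `ℂ`) of its
complexification. -/
noncomputable def specRad {n : Type*} [Fintype n] [DecidableEq n]
    (M : Matrix n n ℝ) : ENNReal :=
  spectralRadius ℂ (M.map (algebraMap ℝ ℂ))

open scoped Topology

theorem tendsto_pow_atTop_nhds_zero_of_spectralRadius_lt_one {A : Type*} [NormedRing A]
    [NormedAlgebra ℂ A] [CompleteSpace A] {a : A} (h : spectralRadius ℂ a < 1) :
    Tendsto (a ^ ·) atTop (𝓝 0) := by
  obtain ⟨r, hρr, hr1⟩ := ENNReal.lt_iff_exists_nnreal_btwn.mp h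
  have hbound : ∀ᶠ n : ℕ in atTop, ‖a ^ n‖ ≤ (r : ℝ) ^ n := by
    filter_upwards [(spectrum.pow_nnnorm_pow_one_div_tendsto_nhds_spectralRadius a)
      |>.eventually_lt_const hρr, eventually_gt_atTop 0] with n hn hn0
    rw [one_div, ENNReal.rpow_inv_lt_iff (by positivity), ENNReal.rpow_natCast] at hn
    have : ‖a ^ n‖₊ < r ^ n := by exact_mod_cast hn
    exact_mod_cast this.le
  exact squeeze_zero_norm' hbound
    (tendsto_pow_atTop_nhds_zero_of_lt_one r.2 (by exact_mod_cast hr1))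

section

attribute [local instance] Matrix.linftyOpNormedRing Matrix.linftyOpNormedAlgebra

theorem tendsto_pow_atTop_nhds_zero_of_specRad_lt_one {n : Type*} [Fintype n] [DecidableEq n]
    {M : Matrix n n ℝ} (h : specRad M < 1) : Tendsto (M ^ ·) atTop (𝓝 0) := by
  have : CompleteSpace (Matrix n n ℂ) := FiniteDimensional.complete ℂ _
  have hre : Continuous fun N : Matrix n n ℂ => N.map Complex.re :=
    continuous_id.matrix_map Complex.continuous_re
  have hpow (s : ℕ) : M ^ s = ((M.map (algebraMap ℝ ℂ)) ^ s).map Complex.re := by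
    rw [← RingHom.mapMatrix_apply, ← map_pow]
    ext i j
    simp
  simpa [hpow, Function.comp_def] using
    (hre.tendsto 0).comp (tendsto_pow_atTop_nhds_zero_of_spectralRadius_lt_one h)

end

namespace Matrix

variable {α n : Type*} [Fintype n] [DecidableEq n]

theorem sum_range_transpose_pow_mul_mul_pow [Ring α] {L M X : Matrix n n α}
    (hX : X = M + Lᵀ * X * L) (N : ℕ) :
    ∑ s ∈ Finset.range N, (Lᵀ) ^ s * M * L ^ s = X - (Lᵀ) ^ N * X * L ^ N := by
  induction N with
  | zero => simp
  | succ N ih =>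
    have hstep : (Lᵀ) ^ N * X * L ^ N
        = (Lᵀ) ^ N * M * L ^ N + (Lᵀ) ^ (N + 1) * X * L ^ (N + 1) := by
      conv_lhs => rw [hX]
      rw [pow_succ, pow_succ']
      simp only [Matrix.mul_add, Matrix.add_mul, Matrix.mul_assoc]
    rw [Finset.sum_range_succ, ih, hstep]
    abel

variable [CommRing α] [TopologicalSpace α] [IsTopologicalRing α]

theorem tendsto_sum_range_transpose_pow_mul_mul_pow {L M X : Matrix n n α}
    (hL : Tendsto (L ^ ·) atTop (𝓝 0)) (hX : X = M + Lᵀ * X * L) :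
    Tendsto (fun N => ∑ s ∈ Finset.range N, (Lᵀ) ^ s * M * L ^ s) atTop (𝓝 X) := by
  have hcont : Continuous fun Z : Matrix n n α => Zᵀ * X * Z :=
    (continuous_id.matrix_transpose.matrix_mul continuous_const).matrix_mul continuous_id
  have htail : Tendsto (fun N => (Lᵀ) ^ N * X * L ^ N) atTop (𝓝 0) := by
    simpa [Function.comp_def, transpose_pow] using (hcont.tendsto 0).comp hL
  simp only [sum_range_transpose_pow_mul_mul_pow hX]
  simpa using tendsto_const_nhds.sub htail

theorem transpose_eq_of_eq_add_transpose_mul_mul [T2Space α] {L M X : Matrix n n α}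
    (hL : Tendsto (L ^ ·) atTop (𝓝 0)) (hM : Mᵀ = M) (hX : X = M + Lᵀ * X * L) :
    Xᵀ = X := by
  have hXt : Xᵀ = M + Lᵀ * Xᵀ * L := by
    conv_lhs => rw [hX]
    simp only [transpose_add, transpose_mul, transpose_transpose, hM, Matrix.mul_assoc]
  exact tendsto_nhds_unique (tendsto_sum_range_transpose_pow_mul_mul_pow hL hXt)
    (tendsto_sum_range_transpose_pow_mul_mul_pow hL hX)

theorem trace_mul_eq_of_hasSum_of_tendsto [T2Space α] {L D₀ D M X : Matrix n n α}
    (hD : HasSum (fun s : ℕ => L ^ s * D₀ * (Lᵀ) ^ s) D)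
    (hX : Tendsto (fun N => ∑ s ∈ Finset.range N, (Lᵀ) ^ s * M * L ^ s) atTop (𝓝 X)) :
    (D * M).trace = (D₀ * X).trace := by
  have hcont : Continuous fun Y : Matrix n n α => (Y * M).trace :=
    (continuous_id.matrix_mul continuous_const).matrix_trace
  have hsum :=
    (hD.map ((traceAddMonoidHom n α).comp (AddMonoidHom.mulRight M)) hcont).tendsto_sum_nat
  have hpartial (N : ℕ) : ∑ s ∈ Finset.range N, (L ^ s * D₀ * (Lᵀ) ^ s * M).trace
      = (D₀ * ∑ s ∈ Finset.range N, (Lᵀ) ^ s * M * L ^ s).trace := by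
    rw [Finset.mul_sum, trace_sum]
    refine Finset.sum_congr rfl fun s _ => ?_
    rw [Matrix.mul_assoc, Matrix.mul_assoc, trace_mul_comm]
    simp only [Matrix.mul_assoc]
  have htrace : Continuous fun Y : Matrix n n α => (D₀ * Y).trace :=
    (continuous_const.matrix_mul continuous_id).matrix_trace
  refine tendsto_nhds_unique hsum ?_
  simpa [Function.comp_def, hpartial] using (htrace.tendsto X).comp hX

end Matrix

theorem lqr_value_sub_eq_lyapunov {α m n : Type*} [Fintype m] [Fintype n] [CommRing α]
    {A P P' Q : Matrix m m α} {R : Matrix n n α} {B : Matrix m n α} {K K' G : Matrix n m α}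
    (hPs : Pᵀ = P) (hRs : Rᵀ = R)
    (hP : P = (Q + Kᵀ * R * K) + (A - B * K)ᵀ * P * (A - B * K))
    (hP' : P' = (Q + K'ᵀ * R * K') + (A - B * K')ᵀ * P' * (A - B * K'))
    (hG : G = (R + Bᵀ * P * B) * K - Bᵀ * P * A) :
    P - P' = ((K - K')ᵀ * G + Gᵀ * (K - K') - (K - K')ᵀ * (R + Bᵀ * P * B) * (K - K'))
      + (A - B * K')ᵀ * (P - P') * (A - B * K') := by
  nth_rewrite 1 [hP, hP']
  subst hG
  simp only [transpose_sub, transpose_add, transpose_mul, transpose_transpose, hPs, hRs,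
    Matrix.mul_add, Matrix.add_mul, Matrix.mul_sub, Matrix.sub_mul, Matrix.mul_assoc]
  abel

theorem lqr_cost_difference_formula_general {d k : ℕ}
    (A De P P' D' : Matrix (Fin d) (Fin d) ℝ) (Q : Matrix (Fin d) (Fin d) ℝ)
    (R : Matrix (Fin k) (Fin k) ℝ) (B : Matrix (Fin d) (Fin k) ℝ)
    (K K' G : Matrix (Fin k) (Fin d) ℝ) (σ : ℝ)
    (hQ : Q.PosDef) (hR : R.PosDef)
    (hK : specRad (A - B * K) < 1) (hK' : specRad (A - B * K') < 1)
    (hP : P = (Q + Kᵀ * R * K) + (A - B * K)ᵀ * P * (A - B * K))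
    (hP' : P' = (Q + K'ᵀ * R * K') + (A - B * K')ᵀ * P' * (A - B * K'))
    (hD' : HasSum (fun s : ℕ => (A - B * K') ^ s * De * ((A - B * K')ᵀ) ^ s) D')
    (hG : G = (R + Bᵀ * P * B) * K - Bᵀ * P * A) :
    ((De * P).trace + σ ^ 2 * R.trace) - ((De * P').trace + σ ^ 2 * R.trace)
      = (D' * ((K - K')ᵀ * G + Gᵀ * (K - K')
          - (K - K')ᵀ * (R + Bᵀ * P * B) * (K - K'))).trace := by
  have hQs : Qᵀ = Q := (isHermitian_iff_isSymm.mp hQ.isHermitian).eq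
  have hRs : Rᵀ = R := (isHermitian_iff_isSymm.mp hR.isHermitian).eq
  have hPs : Pᵀ = P := by
    refine transpose_eq_of_eq_add_transpose_mul_mul
      (tendsto_pow_atTop_nhds_zero_of_specRad_lt_one hK) ?_ hP
    simp [transpose_mul, hQs, hRs, Matrix.mul_assoc]
  rw [trace_mul_eq_of_hasSum_of_tendsto hD' (tendsto_sum_range_transpose_pow_mul_mul_pow
    (tendsto_pow_atTop_nhds_zero_of_specRad_lt_one hK')
    (lqr_value_sub_eq_lyapunov hPs hRs hP hP' hG)), Matrix.mul_sub, trace_sub]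
  ring

theorem lqr_cost_difference_formula {d k : ℕ}
    (A De P P' D' : Matrix (Fin d) (Fin d) ℝ) (Q : Matrix (Fin d) (Fin d) ℝ)
    (R : Matrix (Fin k) (Fin k) ℝ) (B : Matrix (Fin d) (Fin k) ℝ)
    (K K' G : Matrix (Fin k) (Fin d) ℝ) (σ : ℝ)
    (hQ : Q.PosDef) (hR : R.PosDef) (hDe : De.PosSemidef)
    (hK : specRad (A - B * K) < 1) (hK' : specRad (A - B * K') < 1)
    (hP : P = (Q + Kᵀ * R * K) + (A - B * K)ᵀ * P * (A - B * K))
    (hP' : P' = (Q + K'ᵀ * R * K') + (A - B * K')ᵀ * P' * (A - B * K'))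
    (hD' : HasSum (fun s : ℕ => (A - B * K') ^ s * De * ((A - B * K')ᵀ) ^ s) D')
    (hG : G = (R + Bᵀ * P * B) * K - Bᵀ * P * A) :
    ((De * P).trace + σ ^ 2 * R.trace) - ((De * P').trace + σ ^ 2 * R.trace)
      = (D' * ((K - K')ᵀ * G + Gᵀ * (K - K')
          - (K - K')ᵀ * (R + Bᵀ * P * B) * (K - K'))).trace :=
  lqr_cost_difference_formula_general A De P P' D' Q R B K K' G σ hQ hR hK hK' hP hP' hD' hG
end

section
/- Suppose K, K' ∈ ℝ^{k×d} satisfy ‖K‖,‖K'‖ ≤ c_K, ‖A−BK‖,‖A−BK'‖ ≤ c_A, ρ(A−BK),ρ(A−BK') ≤ ρ < 1, and let P_K, P_{K'} solve the respective Stein equations P = Q + KᵀRK + (A−BK)ᵀP(A−BK). Then P_K − P_{K'} − (A−BK)ᵀ(P_K − P_{K'})(A−BK') = KᵀR(K−K') + (K−K')ᵀRK' − (A−BK)ᵀP_K B(K−K') − (K−K')ᵀBᵀP_{K'}(A−BK'). -/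
open Matrix Filter MeasureTheory ProbabilityTheory

/-!
Subtract the two Stein equations. Both quadratic terms telescope through
`Xᵀ M X - Yᵀ N Y - Xᵀ (M - N) Y = Xᵀ M (X - Y) + (X - Y)ᵀ N Y`, and the two closed-loop
matrices differ by `(A - B K) - (A - B K') = -B (K - K')`.
-/

namespace Matrix

variable {α m n : Type*} [CommRing α] [Fintype n]

theorem transpose_mul_mul_sub_transpose_mul_mul (M N : Matrix n n α) (X Y : Matrix n m α) :
    Xᵀ * M * X - Yᵀ * N * Y - Xᵀ * (M - N) * Y = Xᵀ * M * (X - Y) + (X - Y)ᵀ * N * Y := by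
  simp only [Matrix.mul_sub, Matrix.sub_mul, transpose_sub]
  abel

theorem stein_solution_sub [Fintype m] {Q P P' L L' : Matrix n n α} {R : Matrix m m α}
    {K K' : Matrix m n α}
    (hP : P = Q + Kᵀ * R * K + Lᵀ * P * L) (hP' : P' = Q + K'ᵀ * R * K' + L'ᵀ * P' * L') :
    P - P' - Lᵀ * (P - P') * L'
      = Kᵀ * R * (K - K') + (K - K')ᵀ * R * K' + Lᵀ * P * (L - L') + (L - L')ᵀ * P' * L' := by
  have hdiff : P - P' = (Kᵀ * R * K - K'ᵀ * R * K') + (Lᵀ * P * L - L'ᵀ * P' * L') := by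
    conv_lhs => rw [hP, hP']
    abel
  have hcost : Kᵀ * R * K - K'ᵀ * R * K' = Kᵀ * R * (K - K') + (K - K')ᵀ * R * K' := by
    simpa using transpose_mul_mul_sub_transpose_mul_mul R R K K'
  nth_rewrite 1 [hdiff]
  rw [add_sub_assoc, hcost, transpose_mul_mul_sub_transpose_mul_mul, ← add_assoc]

end Matrix

open scoped Matrix.Norms.L2Operator in
theorem stein_solution_difference_identity_general {d k : ℕ}
    (A PK PK' : Matrix (Fin d) (Fin d) ℝ) (Q : Matrix (Fin d) (Fin d) ℝ)
    (R : Matrix (Fin k) (Fin k) ℝ) (B : Matrix (Fin d) (Fin k) ℝ)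
    (K K' : Matrix (Fin k) (Fin d) ℝ)
    (hPK : PK = (Q + Kᵀ * R * K) + (A - B * K)ᵀ * PK * (A - B * K))
    (hPK' : PK' = (Q + K'ᵀ * R * K') + (A - B * K')ᵀ * PK' * (A - B * K')) :
    PK - PK' - (A - B * K)ᵀ * (PK - PK') * (A - B * K')
      = Kᵀ * R * (K - K') + (K - K')ᵀ * R * K'
        - (A - B * K)ᵀ * PK * B * (K - K')
        - (K - K')ᵀ * Bᵀ * PK' * (A - B * K') := by
  have hclosed : (A - B * K) - (A - B * K') = -(B * (K - K')) := by
    rw [Matrix.mul_sub]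
    abel
  rw [Matrix.stein_solution_sub hPK hPK', hclosed, transpose_neg, transpose_mul]
  simp only [Matrix.mul_neg, Matrix.neg_mul, Matrix.mul_assoc, ← sub_eq_add_neg]

open scoped Matrix.Norms.L2Operator in
theorem stein_solution_difference_identity {d k : ℕ}
    (A PK PK' : Matrix (Fin d) (Fin d) ℝ) (Q : Matrix (Fin d) (Fin d) ℝ)
    (R : Matrix (Fin k) (Fin k) ℝ) (B : Matrix (Fin d) (Fin k) ℝ)
    (K K' : Matrix (Fin k) (Fin d) ℝ) (cK cA : ℝ) (ρ : ENNReal)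
    (hQ : Q.PosDef) (hR : R.PosDef)
    (hKn : ‖K‖ ≤ cK) (hK'n : ‖K'‖ ≤ cK)
    (hAn : ‖A - B * K‖ ≤ cA) (hA'n : ‖A - B * K'‖ ≤ cA)
    (hρ : ρ < 1)
    (hKr : specRad (A - B * K) ≤ ρ) (hK'r : specRad (A - B * K') ≤ ρ)
    (hPK : PK = (Q + Kᵀ * R * K) + (A - B * K)ᵀ * PK * (A - B * K))
    (hPK' : PK' = (Q + K'ᵀ * R * K') + (A - B * K')ᵀ * PK' * (A - B * K')) :
    PK - PK' - (A - B * K)ᵀ * (PK - PK') * (A - B * K')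
      = Kᵀ * R * (K - K') + (K - K')ᵀ * R * K'
        - (A - B * K)ᵀ * PK * B * (K - K')
        - (K - K')ᵀ * Bᵀ * PK' * (A - B * K') :=
  stein_solution_difference_identity_general A PK PK' Q R B K K' hPK hPK'
end
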